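/- For the orthogonal model with 0 ≤ β < 1, if (1/N) log Z_N(β) = log 2 + G_N(β) with G_N → G monotonically and G differentiable, then the Gibbs energy densities h_N converge in distribution to the constant -G'(β); in particular ⟨e^{-λ h_N}⟩ = Z_N(β + λ/N)/Z_N(β) = exp(λ G'_N(β*)) for some β* ∈ [β, β + λ/N], and this converges to e^{λ G'(β)} for every λ. -/

import Mathlib

open Finset Filter Topology Matrix

/-- The spin value associated to a Boolean configuration entry. -/
noncomputable def spin (b : Bool) : ℝ := if b then 1 else -1

/-- Hamiltonian of the orthogonal model: `H_N(σ) = -(1/2) Σ_{i,j} J_{ij} σ_i σ_j`. -/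
noncomputable def Ho (J : (N : ℕ) → Matrix (Fin N) (Fin N) ℝ) (N : ℕ)
    (σ : Fin N → Bool) : ℝ :=
  -(1 / 2) * ∑ i, ∑ j, J N i j * spin (σ i) * spin (σ j)

/-- Partition function of the orthogonal model. -/
noncomputable def Zo (J : (N : ℕ) → Matrix (Fin N) (Fin N) ℝ) (N : ℕ) (β : ℝ) : ℝ :=
  ∑ σ : Fin N → Bool, Real.exp (-β * Ho J N σ)

/-- Gibbs expectation of the orthogonal model. -/
noncomputable def gibbso (J : (N : ℕ) → Matrix (Fin N) (Fin N) ℝ) (N : ℕ) (β : ℝ)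
    (f : (Fin N → Bool) → ℝ) : ℝ :=
  (∑ σ : Fin N → Bool, f σ * Real.exp (-β * Ho J N σ)) / Zo J N β

/-- `G_N(β) := (1/N) log Z_N(β) - log 2` for the orthogonal model. -/
noncomputable def Go (J : (N : ℕ) → Matrix (Fin N) (Fin N) ℝ) (N : ℕ) (β : ℝ) : ℝ :=
  (1 / (N : ℝ)) * Real.log (Zo J N β) - Real.log 2

/-!
The Laplace transform of the energy density is a ratio of partition functions,
`⟨exp (-λ h_N)⟩_β = Z_N(β + λ/N) / Z_N(β) = exp (N (G_N (β + λ/N) - G_N β))`, so everything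
reduces to `N (G_N (β + λ/N) - G_N β) → λ G'(β)`; the distribution functions then converge by
exponential Chebyshev bounds.

For `0 < β` this is a fact about convex functions: the `G_N` are convex (log-sum-exp) and
converge pointwise near `β` to a function differentiable at `β`, so their difference quotients
over intervals shrinking to `β` converge to `G'(β)`.

At `β = 0` the limit is only known on one side, and we use instead the bound
`b tr J / 2N ≤ G_N b ≤ b tr J / 2N + 2 b²`, uniform in `N` and valid for every real `b` because
`J` is orthogonal. The lower bound is Jensen. For the upper bound, `σ ⬝ Jσ - tr J` is, up to the
factor 4, the average over random partitions `δ` of the form coupling the sites in `δ` to those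
outside. In that form the spins in `δ` enter linearly, with coefficients `(J y)_i` that do not
depend on them, so summing them out one at a time with `cosh x ≤ exp (x² / 2)` gives a Gaussian
bound in `‖J y‖² = ‖y‖² ≤ N`.
-/

theorem tendsto_slope_of_convexOn {f : ℕ → ℝ → ℝ} {g : ℝ → ℝ} {g' β : ℝ} {x : ℕ → ℝ}
    (hconv : ∀ n, ConvexOn ℝ Set.univ (f n))
    (hlim : ∀ᶠ y in 𝓝 β, Tendsto (fun n => f n y) atTop (𝓝 (g y)))
    (hg : HasDerivAt g g' β) (hx : Tendsto x atTop (𝓝[≠] β)) :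
    Tendsto (fun n => slope (f n) β (x n)) atTop (𝓝 g') := by
  have hslope := hasDerivAt_iff_tendsto_slope.1 hg
  have hlim_slope : ∀ y, Tendsto (fun n => f n y) atTop (𝓝 (g y)) →
      Tendsto (fun n => slope (f n) β y) atTop (𝓝 (slope g β y)) := fun y hy => by
    simp only [slope_def_field]
    exact (hy.sub hlim.self_of_nhds).div_const _
  have hxβ : Tendsto x atTop (𝓝 β) := tendsto_nhds_of_tendsto_nhdsWithin hx
  have hxne : ∀ᶠ n in atTop, x n ≠ β := (tendsto_nhdsWithin_iff.1 hx).2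
  refine tendsto_order.2 ⟨fun a ha => ?_, fun a ha => ?_⟩
  · obtain ⟨y, ⟨hay, hy⟩, hyβ⟩ :=
      (((hslope.mono_left (nhdsLT_le_nhdsNE β)).eventually (lt_mem_nhds ha)).and
        (nhdsWithin_le_nhds hlim) |>.and self_mem_nhdsWithin).exists
    filter_upwards [(hlim_slope y hy).eventually (lt_mem_nhds hay),
      hxβ.eventually (lt_mem_nhds hyβ), hxne] with n hn hyx hxn
    exact hn.trans_le <| (hconv n).slope_mono trivial ⟨trivial, hyβ.ne⟩ ⟨trivial, hxn⟩ hyx.le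
  · obtain ⟨y, ⟨hay, hy⟩, hβy⟩ :=
      (((hslope.mono_left (nhdsGT_le_nhdsNE β)).eventually (gt_mem_nhds ha)).and
        (nhdsWithin_le_nhds hlim) |>.and self_mem_nhdsWithin).exists
    filter_upwards [(hlim_slope y hy).eventually (gt_mem_nhds hay),
      hxβ.eventually (gt_mem_nhds hβy), hxne] with n hn hxy hxn
    exact ((hconv n).slope_mono trivial ⟨trivial, hxn⟩ ⟨trivial, hβy.ne'⟩ hxy.le).trans_lt hn

theorem tendsto_of_quadratic_sandwich {f : ℕ → ℝ → ℝ} {c : ℕ → ℝ} {g : ℝ → ℝ} {g' C : ℝ}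
    (hf : ∀ᶠ n in atTop, ∀ b, b * c n ≤ f n b ∧ f n b ≤ b * c n + C * b ^ 2)
    (hlim : ∀ᶠ x in 𝓝[≥] 0, Tendsto (fun n => f n x) atTop (𝓝 (g x)))
    (hg : HasDerivWithinAt g g' (Set.Ioi 0) 0) :
    Tendsto c atTop (𝓝 g') := by
  have hg0 : g 0 = 0 := by
    refine tendsto_nhds_unique (hlim.self_of_nhdsWithin Set.self_mem_Ici)
      (tendsto_const_nhds.congr' ?_)
    filter_upwards [hf] with n hn
    exact (le_antisymm (by simpa using (hn 0).2) (by simpa using (hn 0).1)).symm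
  have hslope : Tendsto (fun x => g x / x) (𝓝[>] 0) (𝓝 g') := by
    convert (hasDerivWithinAt_iff_tendsto_slope' (by simp)).1 hg using 1
    funext x
    simp [slope_def_field, hg0]
  have hlim' : ∀ᶠ x in 𝓝[>] 0, Tendsto (fun n => f n x) atTop (𝓝 (g x)) :=
    nhdsWithin_mono _ Set.Ioi_subset_Ici_self hlim
  refine tendsto_order.2 ⟨fun a ha => ?_, fun a ha => ?_⟩
  · have hsub : Tendsto (fun x => g x / x - C * x) (𝓝[>] 0) (𝓝 g') := by
      simpa using hslope.sub (tendsto_nhdsWithin_of_tendsto_nhds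
        ((continuous_const_mul C).tendsto' 0 0 (mul_zero C)))
    obtain ⟨x, ⟨hax, hx⟩, hx0⟩ :=
      ((hsub.eventually (lt_mem_nhds ha)).and hlim' |>.and self_mem_nhdsWithin).exists
    have hx0 : (0 : ℝ) < x := hx0
    filter_upwards [hf, ((hx.div_const x).sub_const (C * x)).eventually (lt_mem_nhds hax)]
      with n hn hlt
    refine hlt.trans_le ?_
    rw [sub_le_iff_le_add, div_le_iff₀ hx0]
    nlinarith [(hn x).2]
  · obtain ⟨x, ⟨hax, hx⟩, hx0⟩ :=
      ((hslope.eventually (gt_mem_nhds ha)).and hlim' |>.and self_mem_nhdsWithin).exists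
    have hx0 : (0 : ℝ) < x := hx0
    filter_upwards [hf, (hx.div_const x).eventually (gt_mem_nhds hax)] with n hn hlt
    refine lt_of_le_of_lt ?_ hlt
    rw [le_div_iff₀ hx0]
    nlinarith [(hn x).1]

theorem tendsto_nat_mul_of_quadratic_sandwich {f : ℕ → ℝ → ℝ} {c : ℕ → ℝ} {g' C : ℝ}
    (hf : ∀ᶠ n in atTop, ∀ b, b * c n ≤ f n b ∧ f n b ≤ b * c n + C * b ^ 2)
    (hc : Tendsto c atTop (𝓝 g')) (lam : ℝ) :
    Tendsto (fun n : ℕ => (n : ℝ) * (f n (lam / n) - f n 0)) atTop (𝓝 (lam * g')) := by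
  have hlow : Tendsto (fun n => lam * c n) atTop (𝓝 (lam * g')) := hc.const_mul lam
  have hup : Tendsto (fun n : ℕ => lam * c n + C * lam ^ 2 / n) atTop (𝓝 (lam * g')) := by
    simpa using hlow.add (tendsto_const_div_atTop_nhds_zero_nat (C * lam ^ 2))
  have hf' : ∀ᶠ n : ℕ in atTop, lam * c n ≤ n * (f n (lam / n) - f n 0) ∧
      n * (f n (lam / n) - f n 0) ≤ lam * c n + C * lam ^ 2 / n := by
    filter_upwards [hf, eventually_gt_atTop 0] with n hn hn0
    have hn0 : (0 : ℝ) < n := Nat.cast_pos.2 hn0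
    have hf0 : f n 0 = 0 := le_antisymm (by simpa using (hn 0).2) (by simpa using (hn 0).1)
    obtain ⟨hlo, hhi⟩ := hn (lam / n)
    rw [hf0, sub_zero]
    constructor
    · calc lam * c n = n * (lam / n * c n) := by field_simp
        _ ≤ n * f n (lam / n) := by gcongr
    · calc n * f n (lam / n) ≤ n * (lam / n * c n + C * (lam / n) ^ 2) := by gcongr
        _ = lam * c n + C * lam ^ 2 / n := by field_simp
  exact tendsto_of_tendsto_of_tendsto_of_le_of_le' hlow hup (hf'.mono fun _ h => h.1)
    (hf'.mono fun _ h => h.2)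

theorem tendsto_zero_of_forall_le_of_tendsto {u : ℕ → ℝ} {a : ℝ → ℕ → ℝ} {A : ℝ → ℝ}
    (hu : ∀ n, 0 ≤ u n) (hle : ∀ L, 0 ≤ L → ∀ n, u n ≤ a L n)
    (ha : ∀ L, Tendsto (a L) atTop (𝓝 (A L))) (hA : Tendsto A atTop (𝓝 0)) :
    Tendsto u atTop (𝓝 0) := by
  refine tendsto_order.2 ⟨fun b hb => Eventually.of_forall fun n => hb.trans_le (hu n),
    fun ε hε => ?_⟩
  obtain ⟨L, hL, hL0⟩ := ((hA.eventually (gt_mem_nhds hε)).and (eventually_ge_atTop 0)).exists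
  filter_upwards [(ha L).eventually (gt_mem_nhds hL)] with n hn
  exact (hle L hL0 n).trans_lt hn

section LogSumExp

variable {κ : Type*} [Fintype κ] (x : κ → ℝ)

theorem hasDerivAt_sum_exp_mul (b : ℝ) :
    HasDerivAt (fun b => ∑ k, Real.exp (b * x k)) (∑ k, x k * Real.exp (b * x k)) b :=
  HasDerivAt.fun_sum fun k _ => by simpa [mul_comm] using (hasDerivAt_mul_const (x k)).exp

theorem hasDerivAt_sum_mul_exp_mul (b : ℝ) :
    HasDerivAt (fun b => ∑ k, x k * Real.exp (b * x k)) (∑ k, x k ^ 2 * Real.exp (b * x k)) b :=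
  HasDerivAt.fun_sum fun k _ =>
    (((hasDerivAt_mul_const (x k)).exp).const_mul (x k)).congr_deriv (by ring)

variable [Nonempty κ]

theorem sum_exp_mul_pos (b : ℝ) : 0 < ∑ k, Real.exp (b * x k) :=
  Finset.sum_pos (fun _ _ => Real.exp_pos _) Finset.univ_nonempty

theorem hasDerivAt_log_sum_exp_mul (b : ℝ) :
    HasDerivAt (fun b => Real.log (∑ k, Real.exp (b * x k)))
      ((∑ k, x k * Real.exp (b * x k)) / ∑ k, Real.exp (b * x k)) b :=
  (hasDerivAt_sum_exp_mul x b).log (sum_exp_mul_pos x b).ne'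

theorem convexOn_log_sum_exp_mul :
    ConvexOn ℝ Set.univ (fun b => Real.log (∑ k, Real.exp (b * x k))) := by
  refine convexOn_of_hasDerivWithinAt2_nonneg convex_univ
    (fun b _ => (hasDerivAt_log_sum_exp_mul x b).continuousAt.continuousWithinAt)
    (fun b _ => (hasDerivAt_log_sum_exp_mul x b).hasDerivWithinAt)
    (fun b _ => ((hasDerivAt_sum_mul_exp_mul x b).div (hasDerivAt_sum_exp_mul x b)
      (sum_exp_mul_pos x b).ne').hasDerivWithinAt) fun b _ => ?_
  -- the second derivative is a variance: Cauchy–Schwarz against the weights `exp (b * x k)`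
  have hcs : (∑ k, x k * Real.exp (b * x k)) ^ 2 ≤
      (∑ k, x k ^ 2 * Real.exp (b * x k)) * ∑ k, Real.exp (b * x k) :=
    Finset.sum_sq_le_sum_mul_sum_of_sq_le_mul _ (fun _ _ => by positivity)
      (fun _ _ => (Real.exp_pos _).le) fun _ _ => le_of_eq (by ring)
  exact div_nonneg (by nlinarith) (sq_nonneg _)

end LogSumExp

theorem exp_sum_div_card_le {κ : Type*} [Fintype κ] [Nonempty κ] (f : κ → ℝ) :
    Real.exp ((∑ k, f k) / Fintype.card κ) ≤ (∑ k, Real.exp (f k)) / Fintype.card κ := by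
  have hc : (Fintype.card κ : ℝ) ≠ 0 := Nat.cast_ne_zero.2 Fintype.card_ne_zero
  have := convexOn_exp.map_sum_le (t := univ) (w := fun _ => (Fintype.card κ : ℝ)⁻¹) (p := f)
    (fun _ _ => by positivity) (by simp [hc]) (fun _ _ => Set.mem_univ _)
  simpa [smul_eq_mul, ← mul_sum, div_eq_inv_mul] using this

section SpinSums

variable {ι : Type*} [Fintype ι] [DecidableEq ι]

@[simp]
theorem spin_true : spin true = 1 := if_pos rfl

@[simp]
theorem spin_false : spin false = -1 := if_neg Bool.false_ne_true

theorem spin_mul_self (b : Bool) : spin b * spin b = 1 := by cases b <;> simp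

theorem exp_spin_mul (b : Bool) (m : ℝ) :
    Real.exp (spin b * m) = Real.cosh m + spin b * Real.sinh m := by
  cases b <;> simp [Real.cosh_add_sinh, ← sub_eq_add_neg, Real.cosh_sub_sinh]

theorem sum_spin_mul_eq_zero (i : ι) (F : (ι → Bool) → ℝ)
    (hF : ∀ σ b, F (Function.update σ i b) = F σ) :
    ∑ σ : ι → Bool, spin (σ i) * F σ = 0 := by
  -- flipping the `i`-th spin is a bijection of the cube that negates every term
  have hflip : Function.Involutive fun σ : ι → Bool => Function.update σ i (!σ i) := fun σ => by
    ext j; by_cases h : j = i <;> simp [h]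
  have h := Fintype.sum_bijective _ hflip.bijective (fun σ => spin (σ i) * F σ)
    (fun σ => -(spin (σ i) * F σ)) fun σ => by cases σ i <;> simp [hF]
  rw [sum_neg_distrib] at h
  linarith

theorem sum_spin_mul_spin (i j : ι) :
    ∑ σ : ι → Bool, spin (σ i) * spin (σ j) =
      if i = j then (Fintype.card (ι → Bool) : ℝ) else 0 := by
  split_ifs with h
  · simp [h, spin_mul_self]
  · exact sum_spin_mul_eq_zero i _ fun σ b => by rw [Function.update_of_ne (Ne.symm h)]

theorem sum_spin (i : ι) : ∑ σ : ι → Bool, spin (σ i) = 0 := by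
  simpa using sum_spin_mul_eq_zero i (fun _ => 1) fun _ _ => rfl

theorem sum_exp_spin_mul_add_le (a : ι) (m R : (ι → Bool) → ℝ)
    (hm : ∀ σ b, m (Function.update σ a b) = m σ) (hR : ∀ σ b, R (Function.update σ a b) = R σ) :
    ∑ σ : ι → Bool, Real.exp (spin (σ a) * m σ + R σ) ≤
      ∑ σ : ι → Bool, Real.exp (m σ ^ 2 / 2 + R σ) := by
  have hodd : ∑ σ : ι → Bool, spin (σ a) * (Real.sinh (m σ) * Real.exp (R σ)) = 0 :=
    sum_spin_mul_eq_zero a _ fun σ b => by rw [hm, hR]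
  calc ∑ σ : ι → Bool, Real.exp (spin (σ a) * m σ + R σ)
      = ∑ σ : ι → Bool, (Real.cosh (m σ) * Real.exp (R σ) +
          spin (σ a) * (Real.sinh (m σ) * Real.exp (R σ))) :=
        sum_congr rfl fun σ _ => by rw [Real.exp_add, exp_spin_mul]; ring
    _ = ∑ σ : ι → Bool, Real.cosh (m σ) * Real.exp (R σ) := by
        rw [sum_add_distrib, hodd, add_zero]
    _ ≤ ∑ σ : ι → Bool, Real.exp (m σ ^ 2 / 2 + R σ) := sum_le_sum fun σ _ => by
        rw [Real.exp_add]; gcongr; exact Real.cosh_le_exp_half_sq _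

theorem sum_exp_sum_spin_mul_le (s : Finset ι) (m : ι → (ι → Bool) → ℝ) (r : (ι → Bool) → ℝ)
    (hm : ∀ i ∈ s, ∀ k ∈ s, ∀ σ b, m i (Function.update σ k b) = m i σ)
    (hr : ∀ k ∈ s, ∀ σ b, r (Function.update σ k b) = r σ) :
    ∑ σ : ι → Bool, Real.exp (∑ i ∈ s, spin (σ i) * m i σ + r σ) ≤
      ∑ σ : ι → Bool, Real.exp (∑ i ∈ s, m i σ ^ 2 / 2 + r σ) := by
  induction s using Finset.induction generalizing r with
  | empty => simp
  | insert a s ha ih =>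
    have ha' := mem_insert_self a s
    have hs {i} (hi : i ∈ s) : i ∈ insert a s := mem_insert_of_mem hi
    calc ∑ σ : ι → Bool, Real.exp (∑ i ∈ insert a s, spin (σ i) * m i σ + r σ)
        = ∑ σ : ι → Bool, Real.exp (spin (σ a) * m a σ + (∑ i ∈ s, spin (σ i) * m i σ + r σ)) := by
          simp only [sum_insert ha, add_assoc]
      _ ≤ ∑ σ : ι → Bool, Real.exp (m a σ ^ 2 / 2 + (∑ i ∈ s, spin (σ i) * m i σ + r σ)) := by
          refine sum_exp_spin_mul_add_le a _ _ (hm a ha' a ha') fun σ b => ?_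
          rw [hr a ha']
          congr 1
          refine sum_congr rfl fun i hi => ?_
          rw [Function.update_of_ne (ne_of_mem_of_not_mem hi ha), hm i (hs hi) a ha']
      _ = ∑ σ : ι → Bool, Real.exp (∑ i ∈ s, spin (σ i) * m i σ + (r σ + m a σ ^ 2 / 2)) :=
          sum_congr rfl fun σ _ => congrArg Real.exp (by ring)
      _ ≤ ∑ σ : ι → Bool, Real.exp (∑ i ∈ s, m i σ ^ 2 / 2 + (r σ + m a σ ^ 2 / 2)) :=
          ih _ (fun i hi k hk => hm i (hs hi) k (hs hk)) fun k hk σ b => by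
            rw [hr k (hs hk), hm a ha' k (hs hk)]
      _ = ∑ σ : ι → Bool, Real.exp (∑ i ∈ insert a s, m i σ ^ 2 / 2 + r σ) :=
          sum_congr rfl fun σ _ => congrArg Real.exp (by rw [sum_insert ha]; ring)

end SpinSums

section QuadraticForm

variable {ι : Type*}

noncomputable def maskedSpin (δ σ : ι → Bool) : ι → ℝ := fun j => if δ j then 0 else spin (σ j)

theorem maskedSpin_update [DecidableEq ι] {δ : ι → Bool} {k : ι} (hk : δ k = true)
    (σ : ι → Bool) (b : Bool) : maskedSpin δ (Function.update σ k b) = maskedSpin δ σ := by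
  ext j
  by_cases h : j = k
  · simp [maskedSpin, h, hk]
  · simp [maskedSpin, Function.update_of_ne h]

variable [Fintype ι] (A : Matrix ι ι ℝ)

theorem maskedSpin_dotProduct_self_le (δ σ : ι → Bool) :
    maskedSpin δ σ ⬝ᵥ maskedSpin δ σ ≤ Fintype.card ι := by
  calc maskedSpin δ σ ⬝ᵥ maskedSpin δ σ ≤ ∑ _j : ι, (1 : ℝ) :=
        sum_le_sum fun j _ => by unfold maskedSpin; split_ifs <;> simp [spin_mul_self]
    _ = Fintype.card ι := by simp

noncomputable def decoupledForm (δ σ : ι → Bool) : ℝ :=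
  ∑ i ∈ univ.filter (δ · = true), spin (σ i) * (A *ᵥ maskedSpin δ σ) i

theorem decoupledForm_eq (δ σ : ι → Bool) :
    decoupledForm A δ σ = ∑ i, ∑ j,
      (1 + spin (δ i)) * (1 - spin (δ j)) / 4 * (A i j * spin (σ i) * spin (σ j)) := by
  rw [decoupledForm, sum_filter]
  refine sum_congr rfl fun i _ => ?_
  cases δ i
  · simp
  · simp only [if_true, mulVec, dotProduct, maskedSpin, mul_sum]
    refine sum_congr rfl fun j _ => ?_
    cases δ j <;> simp only [spin_true, spin_false, if_true, Bool.false_eq_true, if_false] <;> ring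

variable [DecidableEq ι]

theorem sum_spin_dotProduct_mulVec_spin :
    ∑ σ : ι → Bool, (spin ∘ σ) ⬝ᵥ A *ᵥ (spin ∘ σ) = Fintype.card (ι → Bool) * A.trace := by
  calc ∑ σ : ι → Bool, (spin ∘ σ) ⬝ᵥ A *ᵥ (spin ∘ σ)
      = ∑ i, ∑ j, A i j * ∑ σ : ι → Bool, spin (σ i) * spin (σ j) := by
        simp only [dotProduct, mulVec, Function.comp_apply, mul_sum]
        rw [sum_comm]
        refine sum_congr rfl fun i _ => ?_
        rw [sum_comm]
        exact sum_congr rfl fun j _ => sum_congr rfl fun σ _ => by ring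
    _ = Fintype.card (ι → Bool) * A.trace := by
        simp [sum_spin_mul_spin, trace, mul_sum, mul_comm]

theorem sum_decoupledForm (σ : ι → Bool) :
    ∑ δ : ι → Bool, decoupledForm A δ σ =
      Fintype.card (ι → Bool) / 4 * ((spin ∘ σ) ⬝ᵥ A *ᵥ (spin ∘ σ) - A.trace) := by
  have hweight (i j : ι) : ∑ δ : ι → Bool, (1 + spin (δ i)) * (1 - spin (δ j)) / 4 =
      Fintype.card (ι → Bool) / 4 * (1 - if i = j then 1 else 0) := by
    have h : ∀ δ : ι → Bool, (1 + spin (δ i)) * (1 - spin (δ j)) / 4 =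
        (1 + spin (δ i) - spin (δ j) - spin (δ i) * spin (δ j)) / 4 := fun δ => by ring
    simp only [h, ← sum_div, sum_sub_distrib, sum_add_distrib, sum_spin, sum_spin_mul_spin]
    split_ifs <;> simp
  simp only [decoupledForm_eq, sum_comm (γ := ι → Bool), ← sum_mul, hweight]
  simp only [dotProduct, mulVec, Function.comp_apply, trace, Matrix.diag, mul_sum, mul_sub, sub_mul]
  simp only [sum_sub_distrib, mul_one, mul_ite, ite_mul, mul_zero, zero_mul, sum_ite_eq,
    mem_univ, if_true, mul_assoc, spin_mul_self]
  congr 1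
  exact sum_congr rfl fun i _ => sum_congr rfl fun j _ => by ring

theorem sum_exp_mul_decoupledForm_le (hA : ∀ y, A *ᵥ y ⬝ᵥ A *ᵥ y ≤ y ⬝ᵥ y)
    (δ : ι → Bool) (c : ℝ) :
    ∑ σ : ι → Bool, Real.exp (c * decoupledForm A δ σ) ≤
      Fintype.card (ι → Bool) * Real.exp (c ^ 2 / 2 * Fintype.card ι) := by
  set s := univ.filter (δ · = true)
  set m : ι → (ι → Bool) → ℝ := fun i σ => c * (A *ᵥ maskedSpin δ σ) i
  have hpeel := sum_exp_sum_spin_mul_le s m 0 (fun i _ k hk σ b => by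
    simp only [m, maskedSpin_update (mem_filter.1 hk).2]) fun _ _ _ _ => rfl
  have hsq (σ : ι → Bool) : ∑ i ∈ s, m i σ ^ 2 / 2 ≤ c ^ 2 / 2 * Fintype.card ι :=
    calc ∑ i ∈ s, m i σ ^ 2 / 2 ≤ ∑ i, m i σ ^ 2 / 2 :=
          sum_le_sum_of_subset_of_nonneg (subset_univ s) fun _ _ _ => by positivity
      _ = c ^ 2 / 2 * (A *ᵥ maskedSpin δ σ ⬝ᵥ A *ᵥ maskedSpin δ σ) := by
          simp only [m, dotProduct, mul_sum]
          exact sum_congr rfl fun i _ => by ring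
      _ ≤ c ^ 2 / 2 * Fintype.card ι := by
          gcongr
          exact (hA _).trans (maskedSpin_dotProduct_self_le δ σ)
  calc ∑ σ : ι → Bool, Real.exp (c * decoupledForm A δ σ)
      = ∑ σ : ι → Bool, Real.exp (∑ i ∈ s, spin (σ i) * m i σ + 0) := by
        simp only [decoupledForm, mul_sum, add_zero, m]
        exact sum_congr rfl fun σ _ => congrArg Real.exp (sum_congr rfl fun i _ => by ring)
    _ ≤ ∑ σ : ι → Bool, Real.exp (∑ i ∈ s, m i σ ^ 2 / 2 + 0) := hpeel
    _ ≤ ∑ _σ : ι → Bool, Real.exp (c ^ 2 / 2 * Fintype.card ι) :=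
        sum_le_sum fun σ _ => by rw [add_zero]; gcongr; exact hsq σ
    _ = Fintype.card (ι → Bool) * Real.exp (c ^ 2 / 2 * Fintype.card ι) := by simp

theorem card_le_sum_exp_mul_quadraticForm (t : ℝ) :
    (Fintype.card (ι → Bool) : ℝ) ≤
      ∑ σ : ι → Bool, Real.exp (t * ((spin ∘ σ) ⬝ᵥ A *ᵥ (spin ∘ σ) - A.trace)) := by
  have hcard : (0 : ℝ) < Fintype.card (ι → Bool) := Nat.cast_pos.2 Fintype.card_pos
  have hmean : ∑ σ : ι → Bool, t * ((spin ∘ σ) ⬝ᵥ A *ᵥ (spin ∘ σ) - A.trace) = 0 := by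
    rw [← mul_sum, sum_sub_distrib, sum_spin_dotProduct_mulVec_spin]
    simp
  have := exp_sum_div_card_le fun σ : ι → Bool => t * ((spin ∘ σ) ⬝ᵥ A *ᵥ (spin ∘ σ) - A.trace)
  rwa [hmean, zero_div, Real.exp_zero, le_div_iff₀ hcard, one_mul] at this

theorem sum_exp_mul_quadraticForm_le (hA : ∀ y, A *ᵥ y ⬝ᵥ A *ᵥ y ≤ y ⬝ᵥ y) (t : ℝ) :
    ∑ σ : ι → Bool, Real.exp (t * ((spin ∘ σ) ⬝ᵥ A *ᵥ (spin ∘ σ) - A.trace)) ≤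
      Fintype.card (ι → Bool) * Real.exp (8 * t ^ 2 * Fintype.card ι) := by
  set K : ℝ := (Fintype.card (ι → Bool) : ℝ)
  have hK : 0 < K := Nat.cast_pos.2 Fintype.card_pos
  have hjensen (σ : ι → Bool) :
      Real.exp (t * ((spin ∘ σ) ⬝ᵥ A *ᵥ (spin ∘ σ) - A.trace)) ≤
        (∑ δ : ι → Bool, Real.exp (4 * t * decoupledForm A δ σ)) / K := by
    convert exp_sum_div_card_le fun δ : ι → Bool => 4 * t * decoupledForm A δ σ using 2
    rw [← mul_sum, sum_decoupledForm]
    field_simp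
  calc ∑ σ : ι → Bool, Real.exp (t * ((spin ∘ σ) ⬝ᵥ A *ᵥ (spin ∘ σ) - A.trace))
      ≤ ∑ σ : ι → Bool, (∑ δ : ι → Bool, Real.exp (4 * t * decoupledForm A δ σ)) / K :=
        sum_le_sum fun σ _ => hjensen σ
    _ = (∑ δ : ι → Bool, ∑ σ : ι → Bool, Real.exp (4 * t * decoupledForm A δ σ)) / K := by
        rw [← sum_div, sum_comm]
    _ ≤ (∑ _δ : ι → Bool, K * Real.exp ((4 * t) ^ 2 / 2 * Fintype.card ι)) / K := by
        gcongr with δ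
        exact sum_exp_mul_decoupledForm_le A hA δ (4 * t)
    _ = K * Real.exp (8 * t ^ 2 * Fintype.card ι) := by
        rw [sum_const, card_univ, nsmul_eq_mul, mul_div_cancel_left₀ _ hK.ne']
        ring_nf

end QuadraticForm

theorem mulVec_dotProduct_mulVec_of_mul_transpose_eq_one {n : Type*} [Fintype n] [DecidableEq n]
    {A : Matrix n n ℝ} (hA : A * Aᵀ = 1) (y : n → ℝ) : A *ᵥ y ⬝ᵥ A *ᵥ y = y ⬝ᵥ y := by
  rw [dotProduct_mulVec, ← mulVec_transpose, mulVec_mulVec, mul_eq_one_comm.1 hA, one_mulVec]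

section OrthogonalModel

variable (J : (N : ℕ) → Matrix (Fin N) (Fin N) ℝ) (N : ℕ)

theorem Ho_eq_dotProduct (σ : Fin N → Bool) :
    Ho J N σ = -(1 / 2) * ((spin ∘ σ) ⬝ᵥ J N *ᵥ (spin ∘ σ)) := by
  simp only [Ho, dotProduct, mulVec, Function.comp_apply, mul_sum]
  exact sum_congr rfl fun i _ => sum_congr rfl fun j _ => by ring

theorem Zo_eq_sum_exp_mul (b : ℝ) : Zo J N b = ∑ σ : Fin N → Bool, Real.exp (b * -Ho J N σ) := by
  simp only [Zo, neg_mul, mul_neg]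

theorem Zo_pos (b : ℝ) : 0 < Zo J N b := by
  rw [Zo_eq_sum_exp_mul]
  exact sum_exp_mul_pos _ b

theorem Go_eq_log_sum_exp_mul :
    Go J N = fun b => 1 / (N : ℝ) * Real.log (∑ σ : Fin N → Bool, Real.exp (b * -Ho J N σ)) -
      Real.log 2 := by
  funext b
  rw [Go, Zo_eq_sum_exp_mul]

theorem convexOn_Go : ConvexOn ℝ Set.univ (Go J N) := by
  rw [Go_eq_log_sum_exp_mul]
  exact ((convexOn_log_sum_exp_mul _).smul (by positivity : (0 : ℝ) ≤ 1 / N)).add_const _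

theorem differentiable_Go : Differentiable ℝ (Go J N) := by
  rw [Go_eq_log_sum_exp_mul]
  exact fun b => (((hasDerivAt_log_sum_exp_mul _ b).const_mul _).sub_const _).differentiableAt

theorem exp_nat_mul_sub_Go (hN : N ≠ 0) (a b : ℝ) :
    Real.exp (N * (Go J N a - Go J N b)) = Zo J N a / Zo J N b := by
  have hN : (N : ℝ) ≠ 0 := Nat.cast_ne_zero.2 hN
  have : (N : ℝ) * (Go J N a - Go J N b) = Real.log (Zo J N a) - Real.log (Zo J N b) := by
    rw [Go, Go]
    field_simp
    ring
  rw [this, Real.exp_sub, Real.exp_log (Zo_pos J N a), Real.exp_log (Zo_pos J N b)]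

theorem Go_quadratic_bounds (horth : J N * (J N)ᵀ = 1) (hN : N ≠ 0) (b : ℝ) :
    b * ((J N).trace / (2 * N)) ≤ Go J N b ∧
      Go J N b ≤ b * ((J N).trace / (2 * N)) + 2 * b ^ 2 := by
  set S := ∑ σ : Fin N → Bool,
    Real.exp (b / 2 * ((spin ∘ σ) ⬝ᵥ J N *ᵥ (spin ∘ σ) - (J N).trace))
  have hcard : (Fintype.card (Fin N → Bool) : ℝ) = 2 ^ N := by simp
  have hlo : (2 : ℝ) ^ N ≤ S := hcard ▸ card_le_sum_exp_mul_quadraticForm (J N) (b / 2)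
  have hhi : S ≤ 2 ^ N * Real.exp (2 * b ^ 2 * N) := by
    have := sum_exp_mul_quadraticForm_le (J N)
      (fun y => (mulVec_dotProduct_mulVec_of_mul_transpose_eq_one horth y).le) (b / 2)
    rw [hcard, Fintype.card_fin] at this
    convert this using 4
    ring
  have hS : 0 < S := lt_of_lt_of_le (by positivity) hlo
  have hN' : (0 : ℝ) < N := Nat.cast_pos.2 (Nat.pos_of_ne_zero hN)
  have hGo : Go J N b = b * ((J N).trace / (2 * N)) + (Real.log S - N * Real.log 2) / N := by
    have hZ : Zo J N b = Real.exp (b * (J N).trace / 2) * S := by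
      rw [Zo, mul_sum]
      exact sum_congr rfl fun σ _ => by rw [← Real.exp_add, Ho_eq_dotProduct]; ring_nf
    rw [Go, hZ, Real.log_mul (Real.exp_pos _).ne' hS.ne', Real.log_exp]
    field_simp
    ring
  have hlog_lo : N * Real.log 2 ≤ Real.log S := by
    rw [← Real.log_pow]
    exact Real.log_le_log (by positivity) hlo
  have hlog_hi : Real.log S ≤ N * Real.log 2 + 2 * b ^ 2 * N := by
    calc Real.log S ≤ Real.log (2 ^ N * Real.exp (2 * b ^ 2 * N)) := Real.log_le_log hS hhi
      _ = N * Real.log 2 + 2 * b ^ 2 * N := by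
        rw [Real.log_mul (by positivity) (Real.exp_pos _).ne', Real.log_pow, Real.log_exp]
  rw [hGo]
  constructor
  · have : 0 ≤ (Real.log S - N * Real.log 2) / N := div_nonneg (by linarith) hN'.le
    linarith
  · have : (Real.log S - N * Real.log 2) / N ≤ 2 * b ^ 2 := by
      rw [div_le_iff₀ hN']
      linarith
    linarith

theorem gibbso_exp_neg_mul_energy_density (β lam : ℝ) :
    gibbso J N β (fun σ => Real.exp (-lam * (Ho J N σ / N))) = Zo J N (β + lam / N) / Zo J N β := by
  rw [gibbso, Zo]
  congr 1
  exact sum_congr rfl fun σ _ => by rw [← Real.exp_add]; ring_nf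

theorem exists_Zo_div_Zo_eq_exp_deriv (β : ℝ) {lam : ℝ} (hlam : 0 ≤ lam) (hN : N ≠ 0) :
    ∃ βs, β ≤ βs ∧ βs ≤ β + lam / N ∧
      Zo J N (β + lam / N) / Zo J N β = Real.exp (lam * deriv (Go J N) βs) := by
  rcases hlam.eq_or_lt with rfl | hlam
  · exact ⟨β, le_rfl, by simp, by simp [div_self (Zo_pos J N β).ne']⟩
  have hN' : (0 : ℝ) < N := Nat.cast_pos.2 (Nat.pos_of_ne_zero hN)
  obtain ⟨βs, hβs, hderiv⟩ := exists_deriv_eq_slope (Go J N)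
    (lt_add_of_pos_right β (div_pos hlam hN')) (differentiable_Go J N).continuous.continuousOn
    (differentiable_Go J N).differentiableOn
  refine ⟨βs, hβs.1.le, hβs.2.le, ?_⟩
  rw [hderiv, ← exp_nat_mul_sub_Go J N hN, add_sub_cancel_left]
  congr 1
  generalize Go J N (β + lam / N) - Go J N β = d
  field_simp

end OrthogonalModel

section GibbsExpectation

variable (J : (N : ℕ) → Matrix (Fin N) (Fin N) ℝ) (N : ℕ) (β : ℝ)

theorem gibbso_mono {f g : (Fin N → Bool) → ℝ} (h : ∀ σ, f σ ≤ g σ) :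
    gibbso J N β f ≤ gibbso J N β g :=
  div_le_div_of_nonneg_right (sum_le_sum fun σ _ => by gcongr; exact h σ) (Zo_pos J N β).le

theorem gibbso_const_mul (d : ℝ) (f : (Fin N → Bool) → ℝ) :
    gibbso J N β (fun σ => d * f σ) = d * gibbso J N β f := by
  simp only [gibbso, mul_div_assoc', mul_sum, mul_assoc]

theorem gibbso_const (d : ℝ) : gibbso J N β (fun _ => d) = d := by
  rw [gibbso, ← mul_sum, ← Zo, mul_div_assoc, div_self (Zo_pos J N β).ne', mul_one]

theorem gibbso_one_sub (f : (Fin N → Bool) → ℝ) :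
    gibbso J N β (fun σ => 1 - f σ) = 1 - gibbso J N β f := by
  simp only [gibbso, sub_mul, one_mul, sum_sub_distrib, sub_div]
  rw [← Zo, div_self (Zo_pos J N β).ne']

theorem gibbso_indicator_le_exp_mul (X : (Fin N → Bool) → ℝ) (t : ℝ) {L : ℝ} (hL : 0 ≤ L) :
    gibbso J N β (fun σ => if X σ ≤ t then 1 else 0) ≤
      Real.exp (L * t) * gibbso J N β (fun σ => Real.exp (-L * X σ)) := by
  rw [← gibbso_const_mul]
  refine gibbso_mono J N β fun σ => ?_
  split_ifs with h
  · rw [← Real.exp_add]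
    exact Real.one_le_exp (by nlinarith)
  · positivity

theorem one_sub_gibbso_indicator_le_exp_mul (X : (Fin N → Bool) → ℝ) (t : ℝ) {L : ℝ}
    (hL : 0 ≤ L) :
    1 - gibbso J N β (fun σ => if X σ ≤ t then 1 else 0) ≤
      Real.exp (-L * t) * gibbso J N β (fun σ => Real.exp (-(-L) * X σ)) := by
  rw [← gibbso_one_sub, ← gibbso_const_mul]
  refine gibbso_mono J N β fun σ => ?_
  split_ifs with h
  · simp only [sub_self]
    positivity
  · rw [← Real.exp_add, sub_zero]
    exact Real.one_le_exp (by nlinarith)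

end GibbsExpectation

theorem tendsto_gibbso_indicator (J : (N : ℕ) → Matrix (Fin N) (Fin N) ℝ) (β : ℝ)
    (X : (N : ℕ) → (Fin N → Bool) → ℝ) {m : ℝ}
    (hX : ∀ lam, Tendsto (fun N => gibbso J N β (fun σ => Real.exp (-lam * X N σ))) atTop
      (𝓝 (Real.exp (lam * m))))
    {t : ℝ} (ht : t ≠ -m) :
    Tendsto (fun N => gibbso J N β (fun σ => if X N σ ≤ t then 1 else 0)) atTop
      (𝓝 (if -m ≤ t then 1 else 0)) := by
  have hind_le (N : ℕ) : gibbso J N β (fun σ => if X N σ ≤ t then 1 else 0) ≤ 1 :=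
    (gibbso_mono J N β fun σ => by split_ifs <;> norm_num).trans_eq (gibbso_const J N β 1)
  rcases ht.lt_or_gt with ht | ht
  · rw [if_neg ht.not_ge]
    refine tendsto_zero_of_forall_le_of_tendsto
      (fun N => (gibbso_const J N β 0).symm.trans_le
        (gibbso_mono J N β fun σ => by split_ifs <;> norm_num))
      (fun L hL N => gibbso_indicator_le_exp_mul J N β (X N) t hL)
      (fun L => (hX L).const_mul (Real.exp (L * t))) ?_
    simp only [← Real.exp_add, ← mul_add]
    exact Real.tendsto_exp_atBot.comp (tendsto_id.atTop_mul_const_of_neg (by linarith))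
  · rw [if_pos ht.le]
    have := tendsto_zero_of_forall_le_of_tendsto (fun N => sub_nonneg.2 (hind_le N))
      (fun L hL N => one_sub_gibbso_indicator_le_exp_mul J N β (X N) t hL)
      (fun L => (hX (-L)).const_mul (Real.exp (-L * t))) ?_
    · simpa using (tendsto_const_nhds (x := (1 : ℝ))).sub this
    simp only [← Real.exp_add, neg_mul, ← neg_add, ← mul_add]
    exact Real.tendsto_exp_atBot.comp (tendsto_neg_atTop_atBot.comp
      (tendsto_id.atTop_mul_const (by linarith)))

theorem tendsto_nat_mul_sub_Go (J : (N : ℕ) → Matrix (Fin N) (Fin N) ℝ)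
    (horth : ∀ N, J N * (J N)ᵀ = 1) {G : ℝ → ℝ} {β : ℝ} (hβ : β ∈ Set.Ico (0 : ℝ) 1)
    (hlim : ∀ b ∈ Set.Ico (0 : ℝ) 1, Tendsto (fun N => Go J N b) atTop (𝓝 (G b)))
    (hG : DifferentiableAt ℝ G β) (lam : ℝ) :
    Tendsto (fun N : ℕ => (N : ℝ) * (Go J N (β + lam / N) - Go J N β)) atTop
      (𝓝 (lam * deriv G β)) := by
  rcases hβ.1.eq_or_lt with rfl | hβ0
  · -- at `β = 0` the pointwise limit only exists on one side; use the uniform quadratic bound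
    have hsand : ∀ᶠ N in atTop, ∀ b, b * ((J N).trace / (2 * N)) ≤ Go J N b ∧
        Go J N b ≤ b * ((J N).trace / (2 * N)) + 2 * b ^ 2 :=
      (eventually_ne_atTop 0).mono fun N hN => Go_quadratic_bounds J N (horth N) hN
    have htrace := tendsto_of_quadratic_sandwich hsand
      (Filter.mem_of_superset (Ico_mem_nhdsGE zero_lt_one) hlim) hG.hasDerivAt.hasDerivWithinAt
    simpa using tendsto_nat_mul_of_quadratic_sandwich hsand htrace lam
  rcases eq_or_ne lam 0 with rfl | hlam
  · simp
  have hx : Tendsto (fun N : ℕ => β + lam / N) atTop (𝓝[≠] β) := by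
    refine tendsto_nhdsWithin_iff.2
      ⟨?_, (eventually_ne_atTop 0).mono fun N hN => by simp [hlam, hN]⟩
    simpa using (tendsto_const_div_atTop_nhds_zero_nat lam).const_add β
  have hslope := tendsto_slope_of_convexOn (convexOn_Go J)
    (Filter.mem_of_superset (Ioo_mem_nhds hβ0 hβ.2) fun b hb => hlim b ⟨hb.1.le, hb.2⟩)
    hG.hasDerivAt hx
  refine (hslope.const_mul lam).congr' ?_
  filter_upwards [eventually_ne_atTop 0] with N hN
  rw [slope_def_field, add_sub_cancel_left]
  generalize Go J N (β + lam / N) - Go J N β = d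
  field_simp

theorem orthogonal_model_energy_density_convergence_general
    (J : (N : ℕ) → Matrix (Fin N) (Fin N) ℝ)
    (horth : ∀ N, J N * (J N)ᵀ = 1)
    (β : ℝ) (h0 : 0 ≤ β) (h1 : β < 1)
    (G : ℝ → ℝ)
    (hlim : ∀ b : ℝ, 0 ≤ b → b < 1 →
      Tendsto (fun N : ℕ => Go J N b) atTop (𝓝 (G b)))
    (hdiff : ∀ b ∈ Set.Ico (0 : ℝ) 1, DifferentiableAt ℝ G b) :
    (∀ (lam : ℝ) (N : ℕ), 1 ≤ N →
      gibbso J N β (fun σ => Real.exp (-lam * (Ho J N σ / N)))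
        = Zo J N (β + lam / N) / Zo J N β) ∧
    (∀ lam : ℝ, 0 ≤ lam → ∀ N : ℕ, 1 ≤ N →
      ∃ βs : ℝ, β ≤ βs ∧ βs ≤ β + lam / N ∧
        Zo J N (β + lam / N) / Zo J N β = Real.exp (lam * deriv (Go J N) βs)) ∧
    (∀ lam : ℝ,
      Tendsto (fun N : ℕ => gibbso J N β (fun σ => Real.exp (-lam * (Ho J N σ / N))))
        atTop (𝓝 (Real.exp (lam * deriv G β)))) ∧
    (∀ t : ℝ, t ≠ -deriv G β →
      Tendsto (fun N : ℕ =>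
          gibbso J N β (fun σ => if Ho J N σ / N ≤ t then 1 else 0))
        atTop (𝓝 (if -deriv G β ≤ t then 1 else 0))) := by
  have hlaplace (lam : ℝ) : Tendsto
      (fun N : ℕ => gibbso J N β (fun σ => Real.exp (-lam * (Ho J N σ / N))))
      atTop (𝓝 (Real.exp (lam * deriv G β))) := by
    refine ((Real.continuous_exp.tendsto _).comp (tendsto_nat_mul_sub_Go J horth ⟨h0, h1⟩
      (fun b hb => hlim b hb.1 hb.2) (hdiff β ⟨h0, h1⟩) lam)).congr' ?_
    filter_upwards [eventually_ne_atTop 0] with N hN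
    rw [Function.comp_apply, exp_nat_mul_sub_Go J N hN, gibbso_exp_neg_mul_energy_density]
  exact ⟨fun lam N _ => gibbso_exp_neg_mul_energy_density J N β lam,
    fun lam hlam N hN => exists_Zo_div_Zo_eq_exp_deriv J N β hlam (by omega), hlaplace,
    fun t ht => tendsto_gibbso_indicator J β (fun N σ => Ho J N σ / N) hlaplace ht⟩

/-- For the orthogonal model with `0 ≤ β < 1`: the Laplace transform identity
`⟨e^{-λ h_N}⟩ = Z_N(β+λ/N)/Z_N(β) = exp(λ G'_N(β*))` for some `β* ∈ [β, β+λ/N]`;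
this converges to `e^{λ G'(β)}` for every `λ`; and the energy densities `h_N`
converge in distribution to the constant `-G'(β)`. -/
theorem orthogonal_model_energy_density_convergence
    (J : (N : ℕ) → Matrix (Fin N) (Fin N) ℝ)
    (hsymm : ∀ N, (J N).IsSymm) (horth : ∀ N, J N * (J N)ᵀ = 1)
    (β : ℝ) (h0 : 0 ≤ β) (h1 : β < 1)
    (G : ℝ → ℝ)
    (hmono : ∀ b : ℝ, 0 ≤ b → b < 1 → ∀ N, 1 ≤ N → Go J N b ≤ Go J (N + 1) b)
    (hlim : ∀ b : ℝ, 0 ≤ b → b < 1 →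
      Tendsto (fun N : ℕ => Go J N b) atTop (𝓝 (G b)))
    (hdiff : ∀ b ∈ Set.Ico (0 : ℝ) 1, DifferentiableAt ℝ G b) :
    (∀ (lam : ℝ) (N : ℕ), 1 ≤ N →
      gibbso J N β (fun σ => Real.exp (-lam * (Ho J N σ / N)))
        = Zo J N (β + lam / N) / Zo J N β) ∧
    (∀ lam : ℝ, 0 ≤ lam → ∀ N : ℕ, 1 ≤ N →
      ∃ βs : ℝ, β ≤ βs ∧ βs ≤ β + lam / N ∧
        Zo J N (β + lam / N) / Zo J N β = Real.exp (lam * deriv (Go J N) βs)) ∧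
    (∀ lam : ℝ,
      Tendsto (fun N : ℕ => gibbso J N β (fun σ => Real.exp (-lam * (Ho J N σ / N))))
        atTop (𝓝 (Real.exp (lam * deriv G β)))) ∧
    (∀ t : ℝ, t ≠ -deriv G β →
      Tendsto (fun N : ℕ =>
          gibbso J N β (fun σ => if Ho J N σ / N ≤ t then 1 else 0))
        atTop (𝓝 (if -deriv G β ≤ t then 1 else 0))) :=
  orthogonal_model_energy_density_convergence_general J horth β h0 h1 G hlim hdiff
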